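/- If F ⊆ 2^[n] is shattering-extremal, then the family of sets strongly shattered by F equals the family of sets shattered by F: st(F) = Sh(F). -/

import Mathlib

open scoped symmDiff

/-- `𝓕` shatters `S`: every subset of `S` is the trace of some member of `𝓕` on `S`. -/
def Shatters {n : ℕ} (𝓕 : Finset (Finset (Fin n))) (S : Finset (Fin n)) : Prop :=
  ∀ T ⊆ S, ∃ F ∈ 𝓕, F ∩ S = T

/-- `𝓕` strongly shatters `S`: there is `I ⊆ [n] \ S` with `{H ∪ I : H ⊆ S} ⊆ 𝓕`. -/
def StronglyShatters {n : ℕ} (𝓕 : Finset (Finset (Fin n))) (S : Finset (Fin n)) : Prop :=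
  ∃ I : Finset (Fin n), I ⊆ Sᶜ ∧ ∀ H ⊆ S, H ∪ I ∈ 𝓕

open Classical in
/-- The family of subsets of `[n]` shattered by `𝓕`. -/
noncomputable def Sh {n : ℕ} (𝓕 : Finset (Finset (Fin n))) : Finset (Finset (Fin n)) :=
  Finset.univ.filter (Shatters 𝓕)

open Classical in
/-- The family of subsets of `[n]` strongly shattered by `𝓕`. -/
noncomputable def st {n : ℕ} (𝓕 : Finset (Finset (Fin n))) : Finset (Finset (Fin n)) :=
  Finset.univ.filter (StronglyShatters 𝓕)

/-- `𝓕` is shattering-extremal if it shatters exactly `|𝓕|` sets. -/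
def Extremal {n : ℕ} (𝓕 : Finset (Finset (Fin n))) : Prop :=
  (Sh 𝓕).card = 𝓕.card

/-- The Vapnik–Chervonenkis dimension: the maximum cardinality of a shattered set. -/
noncomputable def dimVC {n : ℕ} (𝓕 : Finset (Finset (Fin n))) : ℕ :=
  (Sh 𝓕).sup Finset.card

/-!
Split `𝓕` at a point `a` into `𝓕₀ = 𝓕.nonMemberSubfamily a` and `𝓕₁ = 𝓕.memberSubfamily a`.
A set avoiding `a` is shattered by `𝓕` iff it is shattered by `𝓕₀ ∪ 𝓕₁`, and `insert a S` is
shattered by `𝓕` iff `S` is shattered by both `𝓕₀` and `𝓕₁`, so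
`|Sh 𝓕| = |Sh (𝓕₀ ∪ 𝓕₁)| + |Sh 𝓕₀ ∩ Sh 𝓕₁|`. Played against Pajor's inequality `|𝓖| ≤ |Sh 𝓖|`
for `𝓕₀`, `𝓕₁`, `𝓕₀ ∪ 𝓕₁` and `𝓕₀ ∩ 𝓕₁`, extremality of `𝓕` forces equality everywhere:
`𝓕₀`, `𝓕₁` and `𝓕₀ ∩ 𝓕₁` are extremal, `Sh (𝓕₀ ∪ 𝓕₁) = Sh 𝓕₀ ∪ Sh 𝓕₁` and
`Sh (𝓕₀ ∩ 𝓕₁) = Sh 𝓕₀ ∩ Sh 𝓕₁`. By induction on the ground set, a set shattered by `𝓕` is then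
strongly shattered by `𝓕₀`, by `𝓕₁`, or (with `a` removed) by `𝓕₀ ∩ 𝓕₁`, and the cube found there
lifts to `𝓕`: a cube `{H ∪ I}` in `𝓕₁` is the cube `{H ∪ insert a I}` in `𝓕`, and a cube in
`𝓕₀ ∩ 𝓕₁` doubles along `a`.
-/

namespace Finset

variable {α : Type*} [DecidableEq α] {𝒜 : Finset (Finset α)} {s : Finset α} {a : α}

lemma Shatters.notMem (hs : 𝒜.Shatters s) (h𝒜 : ∀ u ∈ 𝒜, a ∉ u) : a ∉ s := by
  obtain ⟨u, hu, hsu⟩ := hs.exists_superset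
  exact notMem_mono hsu (h𝒜 u hu)

lemma shatters_image_erase_iff (ha : a ∉ s) :
    (𝒜.image (erase · a)).Shatters s ↔ 𝒜.Shatters s := by
  have hinter (u : Finset α) : s ∩ u.erase a = s ∩ u := by
    rw [inter_erase, erase_eq_of_notMem fun h => ha (mem_inter.1 h).1]
  simp only [Shatters, exists_mem_image, hinter]

lemma shatters_insert_iff (ha : a ∉ s) :
    𝒜.Shatters (insert a s) ↔
      (𝒜.memberSubfamily a).Shatters s ∧ (𝒜.nonMemberSubfamily a).Shatters s := by
  refine ⟨fun h => ⟨fun t hts => ?_, fun t hts => ?_⟩, fun ⟨h₁, h₀⟩ t ht => ?_⟩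
  · obtain ⟨u, hu, hsu⟩ := h (insert_subset_insert a hts)
    have hau : a ∈ u := (mem_inter.1 (hsu ▸ mem_insert_self a t)).2
    refine ⟨u.erase a, mem_memberSubfamily.2 ⟨by rwa [insert_erase hau], notMem_erase a u⟩, ?_⟩
    have hat : a ∉ t := fun h => ha (hts h)
    rw [insert_inter_of_mem hau] at hsu
    rw [inter_erase, erase_eq_of_notMem fun h => ha (mem_inter.1 h).1, ← erase_insert hat, ← hsu,
      erase_insert fun h => ha (mem_inter.1 h).1]
  · obtain ⟨u, hu, hsu⟩ := h (hts.trans (subset_insert a s))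
    have hau : a ∉ u := fun hau => ha (hts (hsu ▸ mem_inter.2 ⟨mem_insert_self a s, hau⟩))
    exact ⟨u, mem_nonMemberSubfamily.2 ⟨hu, hau⟩, by rwa [insert_inter_of_notMem hau] at hsu⟩
  · by_cases hat : a ∈ t
    · obtain ⟨u, hu, hsu⟩ := h₁ (subset_insert_iff.1 ht)
      refine ⟨insert a u, (mem_memberSubfamily.1 hu).1, ?_⟩
      rw [← insert_inter_distrib, hsu, insert_erase hat]
    · obtain ⟨u, hu, hsu⟩ := h₀ ((subset_insert_iff_of_notMem hat).1 ht)
      rw [mem_nonMemberSubfamily] at hu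
      exact ⟨u, hu.1, by rw [insert_inter_of_notMem hu.2, hsu]⟩

lemma card_shatterer_eq_add (𝒜 : Finset (Finset α)) (a : α) :
    #𝒜.shatterer = #(𝒜.image (erase · a)).shatterer +
      #((𝒜.memberSubfamily a).shatterer ∩ (𝒜.nonMemberSubfamily a).shatterer) := by
  have hN : ∀ u ∈ 𝒜.nonMemberSubfamily a, a ∉ u := fun u hu => (mem_nonMemberSubfamily.1 hu).2
  have hnotMem : {s ∈ 𝒜.shatterer | a ∉ s} = (𝒜.image (erase · a)).shatterer := by
    ext s
    simp only [mem_filter, mem_shatterer]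
    refine ⟨fun ⟨hs, ha⟩ => (shatters_image_erase_iff ha).2 hs, fun hs => ?_⟩
    have ha : a ∉ s := hs.notMem (by simp)
    exact ⟨(shatters_image_erase_iff ha).1 hs, ha⟩
  have hmem : #{s ∈ 𝒜.shatterer | a ∈ s} =
      #((𝒜.memberSubfamily a).shatterer ∩ (𝒜.nonMemberSubfamily a).shatterer) := by
    refine card_nbij' (erase · a) (insert a) (fun s hs => ?_) (fun s hs => ?_)
      (fun s hs => insert_erase (mem_filter.1 hs).2) (fun s hs => erase_insert ?_)
    · simp only [coe_filter, Set.mem_ofPred_eq, mem_shatterer] at hs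
      rw [← insert_erase hs.2, shatters_insert_iff (notMem_erase a s)] at hs
      simpa using hs.1
    · simp only [coe_inter, Set.mem_inter_iff, mem_coe, mem_shatterer] at hs
      simpa [shatters_insert_iff (hs.2.notMem hN)] using hs
    · simp only [coe_inter, Set.mem_inter_iff, mem_coe, mem_shatterer] at hs
      exact hs.2.notMem hN
  rw [← hnotMem, ← hmem, add_comm]
  exact (card_filter_add_card_filter_not (a ∈ ·)).symm

section Squeeze

variable {ℬ 𝒞 : Finset (Finset α)}
  (h : #(ℬ.shatterer ∩ 𝒞.shatterer) + #(ℬ ∪ 𝒞).shatterer ≤ #ℬ + #𝒞)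
include h

lemma shatterer_inter_eq_of_card_le :
    (ℬ ∩ 𝒞).shatterer = ℬ.shatterer ∩ 𝒞.shatterer ∧ #(ℬ ∩ 𝒞).shatterer = #(ℬ ∩ 𝒞) := by
  have hsub : (ℬ ∩ 𝒞).shatterer ⊆ ℬ.shatterer ∩ 𝒞.shatterer :=
    subset_inter (shatterer_mono inter_subset_left) (shatterer_mono inter_subset_right)
  have := card_le_card hsub
  have := card_union_add_card_inter ℬ 𝒞
  have := card_le_card_shatterer (ℬ ∪ 𝒞)
  have := card_le_card_shatterer (ℬ ∩ 𝒞)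
  exact ⟨eq_of_subset_of_card_le hsub (by omega), by omega⟩

lemma shatterer_union_eq_of_card_le :
    (ℬ ∪ 𝒞).shatterer = ℬ.shatterer ∪ 𝒞.shatterer ∧
      #ℬ.shatterer = #ℬ ∧ #𝒞.shatterer = #𝒞 := by
  have hsub : ℬ.shatterer ∪ 𝒞.shatterer ⊆ (ℬ ∪ 𝒞).shatterer :=
    union_subset (shatterer_mono subset_union_left) (shatterer_mono subset_union_right)
  have := card_le_card hsub
  have := card_union_add_card_inter ℬ.shatterer 𝒞.shatterer
  have := card_le_card_shatterer ℬ
  have := card_le_card_shatterer 𝒞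
  exact ⟨(eq_of_subset_of_card_le hsub (by omega)).symm, by omega, by omega⟩

end Squeeze

lemma card_shatterer_subfamilies_le (h : #𝒜.shatterer = #𝒜) (a : α) :
    #((𝒜.memberSubfamily a).shatterer ∩ (𝒜.nonMemberSubfamily a).shatterer) +
        #(𝒜.memberSubfamily a ∪ 𝒜.nonMemberSubfamily a).shatterer ≤
      #(𝒜.memberSubfamily a) + #(𝒜.nonMemberSubfamily a) := by
  rw [card_memberSubfamily_add_card_nonMemberSubfamily, memberSubfamily_union_nonMemberSubfamily,
    ← h, card_shatterer_eq_add 𝒜 a, add_comm]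

end Finset

open Finset hiding Shatters

variable {n : ℕ} {𝓕 𝓖 : Finset (Finset (Fin n))} {S : Finset (Fin n)} {a : Fin n}

lemma shatters_iff_finsetShatters : Shatters 𝓕 S ↔ 𝓕.Shatters S := by
  simp only [Shatters, Finset.Shatters, inter_comm S]

lemma Sh_eq_shatterer (𝓕 : Finset (Finset (Fin n))) : Sh 𝓕 = 𝓕.shatterer := by
  ext S
  simp [Sh, shatters_iff_finsetShatters]

lemma StronglyShatters.shatters (h : StronglyShatters 𝓕 S) : Shatters 𝓕 S := by
  obtain ⟨I, hI, hcube⟩ := h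
  refine fun T hT => ⟨T ∪ I, hcube T hT, ?_⟩
  rw [union_inter_distrib_right, inter_eq_left.2 hT,
    disjoint_iff_inter_eq_empty.1 (subset_compl_iff_disjoint_right.1 hI), union_empty]

lemma stronglyShatters_empty (h : 𝓕.Nonempty) : StronglyShatters 𝓕 ∅ := by
  obtain ⟨F, hF⟩ := h
  exact ⟨F, by simp, fun H hH => by rwa [subset_empty.1 hH, empty_union]⟩

lemma StronglyShatters.mono (h𝓖𝓕 : 𝓖 ⊆ 𝓕) (h : StronglyShatters 𝓖 S) : StronglyShatters 𝓕 S := by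
  obtain ⟨I, hI, hcube⟩ := h
  exact ⟨I, hI, fun H hH => h𝓖𝓕 (hcube H hH)⟩

lemma StronglyShatters.of_memberSubfamily (ha : a ∉ S)
    (h : StronglyShatters (𝓕.memberSubfamily a) S) : StronglyShatters 𝓕 S := by
  obtain ⟨I, hI, hcube⟩ := h
  refine ⟨insert a I, insert_subset (mem_compl.2 ha) hI, fun H hH => ?_⟩
  rw [union_insert]
  exact (mem_memberSubfamily.1 (hcube H hH)).1

lemma StronglyShatters.insert_of_inter
    (h : StronglyShatters (𝓕.memberSubfamily a ∩ 𝓕.nonMemberSubfamily a) S) :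
    StronglyShatters 𝓕 (insert a S) := by
  obtain ⟨I, hI, hcube⟩ := h
  have haI : a ∉ I := by
    simpa using (mem_nonMemberSubfamily.1 (mem_inter.1 (hcube ∅ (empty_subset S))).2).2
  refine ⟨I, fun x hx => ?_, fun H hH => ?_⟩
  · simp only [compl_insert, mem_erase, mem_compl]
    exact ⟨ne_of_mem_of_not_mem hx haI, mem_compl.1 (hI hx)⟩
  · have hcube' := mem_inter.1 (hcube (H.erase a) (subset_insert_iff.1 hH))
    by_cases haH : a ∈ H
    · rw [← insert_erase haH, insert_union]
      exact (mem_memberSubfamily.1 hcube'.1).1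
    · rw [erase_eq_of_notMem haH] at hcube'
      exact (mem_nonMemberSubfamily.1 hcube'.2).1

lemma StronglyShatters.of_subfamilies (h : #𝓕.shatterer = #𝓕) (hS : 𝓕.Shatters S)
    (ih₁ : ∀ T, (𝓕.memberSubfamily a).Shatters T → StronglyShatters (𝓕.memberSubfamily a) T)
    (ih₀ : ∀ T, (𝓕.nonMemberSubfamily a).Shatters T →
      StronglyShatters (𝓕.nonMemberSubfamily a) T)
    (ih : ∀ T, (𝓕.memberSubfamily a ∩ 𝓕.nonMemberSubfamily a).Shatters T →
      StronglyShatters (𝓕.memberSubfamily a ∩ 𝓕.nonMemberSubfamily a) T) :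
    StronglyShatters 𝓕 S := by
  have hcard := card_shatterer_subfamilies_le h a
  by_cases haS : a ∈ S
  · rw [← insert_erase haS] at hS ⊢
    have hT := (shatters_insert_iff (notMem_erase a S)).1 hS
    have hmem : S.erase a ∈ (𝓕.memberSubfamily a ∩ 𝓕.nonMemberSubfamily a).shatterer := by
      rw [(shatterer_inter_eq_of_card_le hcard).1, mem_inter, mem_shatterer, mem_shatterer]
      exact hT
    exact (ih _ (mem_shatterer.1 hmem)).insert_of_inter
  · have hmem : S ∈ (𝓕.memberSubfamily a ∪ 𝓕.nonMemberSubfamily a).shatterer := by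
      rw [mem_shatterer, memberSubfamily_union_nonMemberSubfamily]
      exact (shatters_image_erase_iff haS).2 hS
    rw [(shatterer_union_eq_of_card_le hcard).1, mem_union, mem_shatterer, mem_shatterer] at hmem
    rcases hmem with hT | hT
    · exact (ih₁ S hT).of_memberSubfamily haS
    · exact (ih₀ S hT).mono (filter_subset _ _)

lemma StronglyShatters.of_card_shatterer_eq {U : Finset (Fin n)} (hU : ∀ F ∈ 𝓕, F ⊆ U)
    (h : #𝓕.shatterer = #𝓕) (hS : 𝓕.Shatters S) : StronglyShatters 𝓕 S := by
  induction U using Finset.induction_on generalizing 𝓕 S with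
  | empty =>
    obtain ⟨F, hF, hSF⟩ := hS.exists_superset
    rw [subset_empty.1 (hSF.trans (hU F hF))]
    exact stronglyShatters_empty ⟨F, hF⟩
  | insert a U _ ihU =>
    have hU₁ : ∀ F ∈ 𝓕.memberSubfamily a, F ⊆ U := fun F hF => by
      rw [mem_memberSubfamily] at hF
      exact (insert_subset_insert_iff hF.2).1 (hU _ hF.1)
    have hU₀ : ∀ F ∈ 𝓕.nonMemberSubfamily a, F ⊆ U := fun F hF => by
      rw [mem_nonMemberSubfamily] at hF
      exact (subset_insert_iff_of_notMem hF.2).1 (hU _ hF.1)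
    have hcard := card_shatterer_subfamilies_le h a
    exact .of_subfamilies h hS
      (fun _ hT => ihU hU₁ (shatterer_union_eq_of_card_le hcard).2.1 hT)
      (fun _ hT => ihU hU₀ (shatterer_union_eq_of_card_le hcard).2.2 hT)
      (fun _ hT => ihU (fun F hF => hU₀ F (mem_inter.1 hF).2)
        (shatterer_inter_eq_of_card_le hcard).2 hT)

/-- For a shattering-extremal family the strongly shattered sets coincide with the
shattered sets. -/
theorem st_eq_Sh_of_extremal (n : ℕ) (𝓕 : Finset (Finset (Fin n)))
    (h : Extremal 𝓕) : st 𝓕 = Sh 𝓕 := by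
  rw [Extremal, Sh_eq_shatterer] at h
  ext S
  simp only [st, Sh, mem_filter, mem_univ, true_and, shatters_iff_finsetShatters]
  exact ⟨fun hS => shatters_iff_finsetShatters.1 hS.shatters,
    StronglyShatters.of_card_shatterer_eq (fun F _ => subset_univ F) h⟩
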